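/- arXiv:1811.08217 — 2 statements merged into one kernel-verified Lean document; each statement's English description precedes it below -/
import Mathlib

section
/- For all u, v ∈ Z the function x ↦ ρ(x)·(K u)(x)·conj((K v)(x)) is μ-integrable, and whenever (u_j)_{j≥1} converges weakly to u in Z and (v_j)_{j≥1} converges weakly to v in Z, the integrals ∫_X ρ·(K u_j)·conj(K v_j) dμ converge to ∫_X ρ·(K u)·conj(K v) dμ as j → ∞; in particular, the sesquilinear form ρ[u, v] = ∫_X ρ·(K u)·conj(K v) dμ on Z is completely continuous. -/
/-!
A weakly convergent sequence in a Hilbert space is bounded (uniform boundedness), so a compact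
operator maps it into a relatively compact set; every cluster point there is the image of the
weak limit (test against continuous functionals, via Riesz), hence `K u_j → K u` in norm.
Since `1/β + 2/q = 1`, Hölder's inequality puts `f * conj g` in `L^{q/2}` and pairs it with
`ρ ∈ L^β`, so `(f, g) ↦ ∫ ρ f conj g` is a bounded real-bilinear form on `L^q`, hence jointly
continuous.
-/

open scoped InnerProductSpace ENNReal ComplexConjugate
open MeasureTheory Filter Topology

section WeakConvergence

variable {𝕜 Z : Type*} [RCLike 𝕜] [NormedAddCommGroup Z] [InnerProductSpace 𝕜 Z] [CompleteSpace Z]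
  {u : ℕ → Z} {u₀ : Z}

theorem isBounded_range_of_tendsto_inner
    (hu : ∀ w, Tendsto (fun j => ⟪u j, w⟫_𝕜) atTop (𝓝 ⟪u₀, w⟫_𝕜)) :
    Bornology.IsBounded (Set.range u) := by
  obtain ⟨C, hC⟩ := banach_steinhaus (g := fun j => innerSL 𝕜 (u j)) fun w => by
    obtain ⟨M, hM⟩ := (hu w).norm.bddAbove_range
    exact ⟨M, fun j => hM ⟨j, rfl⟩⟩
  refine (Metric.isBounded_closedBall (x := 0) (r := C)).subset ?_
  rintro _ ⟨j, rfl⟩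
  simpa [innerSL_apply_norm] using hC j

theorem tendsto_dual_apply_of_tendsto_inner
    (hu : ∀ w, Tendsto (fun j => ⟪u j, w⟫_𝕜) atTop (𝓝 ⟪u₀, w⟫_𝕜)) (φ : StrongDual 𝕜 Z) :
    Tendsto (fun j => φ (u j)) atTop (𝓝 (φ u₀)) := by
  set w := (InnerProductSpace.toDual 𝕜 Z).symm φ
  have h := (RCLike.continuous_conj.tendsto _).comp (hu w)
  simpa [Function.comp_def, w, InnerProductSpace.toDual_symm_apply] using h

theorem IsCompactOperator.tendsto_of_tendsto_inner {E : Type*} [NormedAddCommGroup E]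
    [NormedSpace 𝕜 E] {K : Z →L[𝕜] E} (hK : IsCompactOperator K)
    (hu : ∀ w, Tendsto (fun j => ⟪u j, w⟫_𝕜) atTop (𝓝 ⟪u₀, w⟫_𝕜)) :
    Tendsto (fun j => K (u j)) atTop (𝓝 (K u₀)) := by
  have hcpt : IsCompact (closure (K '' Set.range u)) :=
    hK.isCompact_closure_image_of_bounded (isBounded_range_of_tendsto_inner hu)
  refine hcpt.tendsto_nhds_of_unique_mapClusterPt
    (.of_forall fun j => subset_closure ⟨u j, ⟨j, rfl⟩, rfl⟩) fun a _ ha => ?_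
  rw [SeparatingDual.eq_iff_forall_dual_eq (R := 𝕜)]
  intro φ
  have hcl : MapClusterPt (φ a) atTop (fun j => φ (K (u j))) :=
    ha.continuousAt_comp φ.continuous.continuousAt
  have hlim := tendsto_dual_apply_of_tendsto_inner hu (φ.comp K)
  obtain ⟨ψ, hψ, hψlim⟩ := hcl.tendsto_subseq
  exact tendsto_nhds_unique hψlim (hlim.comp hψ.tendsto_atTop)

end WeakConvergence

noncomputable def Complex.mulConjCLM : ℂ →L[ℝ] ℂ →L[ℝ] ℂ :=
  (ContinuousLinearMap.mul ℝ ℂ).bilinearComp (.id ℝ ℂ) Complex.conjCLE.toContinuousLinearMap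

@[simp]
theorem Complex.mulConjCLM_apply (a b : ℂ) : Complex.mulConjCLM a b = a * conj b := rfl

section WeightedForm

variable {X : Type*} [MeasurableSpace X] {μ : Measure X} {p q : ℝ≥0∞} {ρ : X → ℝ}

theorem integrable_ofReal_mul_mul_conj (r : ℝ≥0∞) [ENNReal.HolderTriple q q r]
    [ENNReal.HolderConjugate p r] (hρ : MemLp ρ p μ) (f g : Lp ℂ q μ) :
    Integrable (fun x => (ρ x : ℂ) * f x * conj (g x)) μ := by
  have hfg := Complex.mulConjCLM.memLp_of_bilin r (Lp.memLp f) (Lp.memLp g)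
  have h := (ContinuousLinearMap.lsmul ℝ ℝ : ℝ →L[ℝ] ℂ →L[ℝ] ℂ).memLp_of_bilin 1 hρ hfg
  simpa [memLp_one_iff_integrable, mul_assoc, Complex.real_smul] using h

theorem continuous_integral_ofReal_mul_mul_conj (r : ℝ≥0∞) [ENNReal.HolderTriple q q r]
    [ENNReal.HolderConjugate p r] [Fact (1 ≤ p)] [Fact (1 ≤ q)] [Fact (1 ≤ r)]
    (hρ : MemLp ρ p μ) :
    Continuous fun fg : Lp ℂ q μ × Lp ℂ q μ => ∫ x, (ρ x : ℂ) * fg.1 x * conj (fg.2 x) ∂μ := by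
  let weight : Lp ℂ r μ →L[ℝ] ℂ :=
    (ContinuousLinearMap.lsmul ℝ ℝ : ℝ →L[ℝ] ℂ →L[ℝ] ℂ).lpPairing μ p r (hρ.toLp ρ)
  let product : Lp ℂ q μ →L[ℝ] Lp ℂ q μ →L[ℝ] Lp ℂ r μ := Complex.mulConjCLM.holderL μ q q r
  refine (weight.continuous.comp product.continuous₂).congr fun ⟨f, g⟩ => ?_
  simp only [Function.comp_apply, Function.uncurry_apply_pair, weight, product,
    ContinuousLinearMap.lpPairing_eq_integral, ContinuousLinearMap.holderL_apply_apply]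
  refine integral_congr_ae ?_
  filter_upwards [hρ.coeFn_toLp, Complex.mulConjCLM.coeFn_holder (r := r) f g] with x hρx hfg
  simp [hρx, hfg, mul_assoc, Complex.real_smul]

end WeightedForm

/-- For a real weight `ρ ∈ L^β` and a compact operator `K` from a Hilbert
space `Z` into `L^q` with `q = 2β/(β-1)`, the form
`ρ[u,v] = ∫ ρ (K u) conj(K v) dμ` is well defined (the integrand is
integrable), and it is completely continuous: it converts weak convergence of
both arguments into convergence of the integrals. -/
theorem weight_form_completely_continuous
    {X : Type*} [MeasurableSpace X] (μ : Measure X)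
    (β : ℝ) (hβ : 1 < β) (q : ℝ) (hq : q = 2 * β / (β - 1))
    (ρ : X → ℝ) (hρ : MemLp ρ (ENNReal.ofReal β) μ)
    [Fact (1 ≤ ENNReal.ofReal q)]
    {Z : Type*} [NormedAddCommGroup Z] [InnerProductSpace ℂ Z] [CompleteSpace Z]
    (K : Z →L[ℂ] Lp ℂ (ENNReal.ofReal q) μ) (hK : IsCompactOperator K) :
    (∀ u v : Z,
      Integrable (fun x => (ρ x : ℂ) * (K u : X → ℂ) x *
        (starRingEnd ℂ) ((K v : X → ℂ) x)) μ) ∧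
    (∀ (useq vseq : ℕ → Z) (u v : Z),
      (∀ w : Z, Filter.Tendsto (fun j => ⟪useq j, w⟫_ℂ) Filter.atTop (nhds ⟪u, w⟫_ℂ)) →
      (∀ w : Z, Filter.Tendsto (fun j => ⟪vseq j, w⟫_ℂ) Filter.atTop (nhds ⟪v, w⟫_ℂ)) →
      Filter.Tendsto
        (fun j => ∫ x, (ρ x : ℂ) * (K (useq j) : X → ℂ) x *
          (starRingEnd ℂ) ((K (vseq j) : X → ℂ) x) ∂μ)
        Filter.atTop
        (nhds (∫ x, (ρ x : ℂ) * (K u : X → ℂ) x *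
          (starRingEnd ℂ) ((K v : X → ℂ) x) ∂μ))) := by
  have hconj : β.HolderConjugate (q / 2) := by
    convert Real.HolderConjugate.conjExponent hβ using 1
    rw [hq, Real.conjExponent]
    ring
  have hq0 : 0 < q := by linarith [hconj.symm.pos]
  have htriple : q.HolderTriple q (q / 2) := ⟨by rw [inv_div]; ring, hq0, hq0⟩
  set r := ENNReal.ofReal (q / 2)
  have : ENNReal.HolderConjugate (ENNReal.ofReal β) r := hconj.ennrealOfReal
  have : ENNReal.HolderTriple (ENNReal.ofReal q) (ENNReal.ofReal q) r := htriple.ennrealOfReal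
  have : Fact (1 ≤ ENNReal.ofReal β) := ⟨ENNReal.HolderConjugate.one_le _ r⟩
  have : Fact (1 ≤ r) := ⟨ENNReal.HolderConjugate.one_le _ (ENNReal.ofReal β)⟩
  refine ⟨fun u v => integrable_ofReal_mul_mul_conj r hρ (K u) (K v),
    fun useq vseq u v hu hv => ?_⟩
  have hcont := continuous_integral_ofReal_mul_mul_conj (q := ENNReal.ofReal q) r hρ
  have hlim := (hK.tendsto_of_tendsto_inner hu).prodMk_nhds (hK.tendsto_of_tendsto_inner hv)
  exact ((hcont.tendsto (K u, K v)).comp hlim :)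
end

section
/- The curve σ(t) := (γ(t), cot(α/2)·(1 − ‖γ(t)‖)) ∈ E × ℝ is differentiable at t₀, and with respect to the Euclidean norm on E × ℝ given by ‖(a, s)‖² = ‖a‖² + s², one has ‖σ'(t₀)‖² = r(t₀)² · ‖y'(t₀)‖² + (sin(α/2))⁻² · r'(t₀)²; that is, the pullback under x ↦ (x, cot(α/2)(1 − ‖x‖)) of the Euclidean metric on ℝ^{n+1} takes the conical form csc²(α/2) dr² + r² dy² in polar coordinates. -/
/-!
Write `γ = r • y` with `‖y‖ = 1` near `t₀`. Differentiating `‖y‖² = 1` gives `y ⊥ y'`, so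
`γ' = r' • y + r • y'` has `‖γ'‖² = r'² + r² ‖y'‖²` by Pythagoras. The last coordinate of `σ`
contributes `cot²(α/2) r'²`, and `1 + cot² = csc²`.
-/

open Filter Topology
open scoped RealInnerProductSpace

theorem Real.inv_sin_sq_eq_one_add_cot_sq {x : ℝ} (hx : Real.sin x ≠ 0) :
    (Real.sin x)⁻¹ ^ 2 = 1 + Real.cot x ^ 2 := by
  rw [Real.cot_eq_cos_div_sin]
  field_simp
  rw [Real.sin_sq_add_cos_sq]

theorem HasDerivAt.toLp_prodMk {p : ENNReal} [Fact (1 ≤ p)] {E F : Type*}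
    [NormedAddCommGroup E] [NormedSpace ℝ E] [NormedAddCommGroup F] [NormedSpace ℝ F]
    {f : ℝ → E} {g : ℝ → F} {f' : E} {g' : F} {t : ℝ}
    (hf : HasDerivAt f f' t) (hg : HasDerivAt g g' t) :
    HasDerivAt (fun t ↦ WithLp.toLp p (f t, g t)) (WithLp.toLp p (f', g')) t :=
  (WithLp.prodContinuousLinearEquiv p ℝ E F).symm.hasFDerivAt.comp_hasDerivAt t (hf.prodMk hg)

section InnerProductSpace

variable {E : Type*} [NormedAddCommGroup E] [InnerProductSpace ℝ E]

theorem HasDerivAt.inner_eq_zero_of_eventually_norm_eq_one {y : ℝ → E} {y' : E} {t₀ : ℝ}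
    (hy : HasDerivAt y y' t₀) (hunit : ∀ᶠ t in 𝓝 t₀, ‖y t‖ = 1) : ⟪y t₀, y'⟫ = 0 := by
  have hconst : HasDerivAt (‖y ·‖ ^ 2) 0 t₀ :=
    (hasDerivAt_const t₀ (1 : ℝ)).congr_of_eventuallyEq (hunit.mono fun t ht ↦ by simp [ht])
  linarith [hy.norm_sq.unique hconst]

theorem norm_smul_add_smul_sq_of_inner_eq_zero {u w : E} (hu : ‖u‖ = 1) (h : ⟪u, w⟫ = 0)
    (a b : ℝ) : ‖a • u + b • w‖ ^ 2 = a ^ 2 + b ^ 2 * ‖w‖ ^ 2 := by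
  rw [norm_add_sq_real, real_inner_smul_left, real_inner_smul_right, h, norm_smul, norm_smul,
    mul_pow, mul_pow, hu, Real.norm_eq_abs, Real.norm_eq_abs, sq_abs, sq_abs]
  ring

theorem norm_deriv_sq_eq_polar {γ : ℝ → E} {t₀ : ℝ} (hγ : DifferentiableAt ℝ γ t₀)
    (hne : γ t₀ ≠ 0) :
    ‖deriv γ t₀‖ ^ 2 = deriv (‖γ ·‖) t₀ ^ 2 +
      ‖γ t₀‖ ^ 2 * ‖deriv (fun t ↦ ‖γ t‖⁻¹ • γ t) t₀‖ ^ 2 := by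
  set r := (‖γ ·‖)
  set y := fun t ↦ ‖γ t‖⁻¹ • γ t
  have hr : HasDerivAt r (deriv r t₀) t₀ := (hγ.norm ℝ hne).hasDerivAt
  have hy : HasDerivAt y (deriv y t₀) t₀ :=
    ((hγ.norm ℝ hne).inv (norm_ne_zero_iff.mpr hne)).smul hγ |>.hasDerivAt
  have hev_ne : ∀ᶠ t in 𝓝 t₀, γ t ≠ 0 := hγ.continuousAt.eventually_ne hne
  have hunit : ∀ᶠ t in 𝓝 t₀, ‖y t‖ = 1 := hev_ne.mono fun t ht ↦ norm_smul_inv_norm ht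
  have hpolar : γ =ᶠ[𝓝 t₀] fun t ↦ r t • y t := hev_ne.mono fun t ht ↦ by
    simp [r, y, smul_smul, ht]
  have hderiv : deriv γ t₀ = deriv r t₀ • y t₀ + r t₀ • deriv y t₀ :=
    (hγ.hasDerivAt.unique ((hr.smul hy).congr_of_eventuallyEq hpolar)).trans (add_comm _ _)
  rw [hderiv, norm_smul_add_smul_sq_of_inner_eq_zero hunit.self_of_nhds
    (hy.inner_eq_zero_of_eventually_norm_eq_one hunit)]

end InnerProductSpace

theorem cone_metric_polar_form_general
    (n : ℕ) (α : ℝ) (hα : α ∈ Set.Ioc 0 Real.pi)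
    (γ : ℝ → EuclideanSpace ℝ (Fin n)) (t₀ : ℝ)
    (hγ : DifferentiableAt ℝ γ t₀) (hne : γ t₀ ≠ 0)
    (r : ℝ → ℝ) (y : ℝ → EuclideanSpace ℝ (Fin n))
    (hr : ∀ᶠ t in nhds t₀, r t = ‖γ t‖)
    (hy : ∀ᶠ t in nhds t₀, y t = ‖γ t‖⁻¹ • γ t)
    (σ : ℝ → WithLp 2 (EuclideanSpace ℝ (Fin n) × ℝ))
    (hσ : ∀ t, σ t = (WithLp.equiv 2 (EuclideanSpace ℝ (Fin n) × ℝ)).symm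
      (γ t, Real.cot (α / 2) * (1 - ‖γ t‖))) :
    DifferentiableAt ℝ σ t₀ ∧
    ‖deriv σ t₀‖ ^ 2 = (r t₀) ^ 2 * ‖deriv y t₀‖ ^ 2 +
      ((Real.sin (α / 2))⁻¹) ^ 2 * (deriv r t₀) ^ 2 := by
  have hsin : Real.sin (α / 2) ≠ 0 :=
    (Real.sin_pos_of_pos_of_lt_pi (by linarith [hα.1]) (by linarith [hα.2, Real.pi_pos])).ne'
  have hr' : r =ᶠ[𝓝 t₀] (‖γ ·‖) := hr
  have hy' : y =ᶠ[𝓝 t₀] fun t ↦ ‖γ t‖⁻¹ • γ t := hy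
  obtain rfl : σ = fun t ↦ WithLp.toLp 2 (γ t, Real.cot (α / 2) * (1 - ‖γ t‖)) := funext hσ
  have hσ' := hγ.hasDerivAt.toLp_prodMk (p := 2)
    (((hγ.norm ℝ hne).hasDerivAt.const_sub 1).const_mul (Real.cot (α / 2)))
  refine ⟨hσ'.differentiableAt, ?_⟩
  rw [hσ'.deriv, WithLp.prod_norm_sq_eq_of_L2, WithLp.toLp_fst, WithLp.toLp_snd,
    norm_deriv_sq_eq_polar hγ hne, hr'.deriv_eq, hy'.deriv_eq, hr.self_of_nhds,
    Real.inv_sin_sq_eq_one_add_cot_sq hsin]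
  simp only [Real.norm_eq_abs, sq_abs]
  ring

/-- The pullback of the Euclidean metric on `ℝⁿ × ℝ` under the cone map
`x ↦ (x, cot(α/2)(1 - ‖x‖))` takes the conical form
`csc²(α/2) dr² + r² dy²` in polar coordinates: for a curve `γ` differentiable
at `t₀` with `γ t₀ ≠ 0`, the lifted curve
`σ t = (γ t, cot(α/2)(1 - ‖γ t‖))` (in `ℝⁿ × ℝ` with the Euclidean norm
`‖(a,s)‖² = ‖a‖² + s²`, i.e. the `L²` product norm) is differentiable at `t₀`
and `‖σ'(t₀)‖² = r(t₀)² ‖y'(t₀)‖² + (sin(α/2))⁻² r'(t₀)²`. -/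
theorem cone_metric_polar_form
    (n : ℕ) (hn : 1 ≤ n) (α : ℝ) (hα : α ∈ Set.Ioc 0 Real.pi)
    (γ : ℝ → EuclideanSpace ℝ (Fin n)) (t₀ : ℝ)
    (hγ : DifferentiableAt ℝ γ t₀) (hne : γ t₀ ≠ 0)
    (r : ℝ → ℝ) (y : ℝ → EuclideanSpace ℝ (Fin n))
    (hr : ∀ᶠ t in nhds t₀, r t = ‖γ t‖)
    (hy : ∀ᶠ t in nhds t₀, y t = ‖γ t‖⁻¹ • γ t)
    (σ : ℝ → WithLp 2 (EuclideanSpace ℝ (Fin n) × ℝ))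
    (hσ : ∀ t, σ t = (WithLp.equiv 2 (EuclideanSpace ℝ (Fin n) × ℝ)).symm
      (γ t, Real.cot (α / 2) * (1 - ‖γ t‖))) :
    DifferentiableAt ℝ σ t₀ ∧
    ‖deriv σ t₀‖ ^ 2 = (r t₀) ^ 2 * ‖deriv y t₀‖ ^ 2 +
      ((Real.sin (α / 2))⁻¹) ^ 2 * (deriv r t₀) ^ 2 :=
  cone_metric_polar_form_general n α hα γ t₀ hγ hne r y hr hy σ hσ
end
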